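/- Let X be a locally compact Hausdorff space with a continuous proper G-action, let π : C₀(X) → B(H) be a nondegenerate covariant representation on the G-Hilbert space H, and let T ∈ B(H) be such that 1 − T² is a compact operator. Then for every φ ∈ C₀(X) the map g ↦ π(φ)(1 − (u_g T u_g⁻¹)²) belongs to C₀(G, K(H)). -/

import Mathlib

/-!
Put `K = 1 - T²`; then `1 - (u_g T u_g⁻¹)² = u_g K u_g*`, so everything is about conjugates of the
compact operator `K`.

A uniformly bounded, strongly convergent family of operators converges uniformly on compact sets,
hence in norm after composing with a compact operator. Applied to `g ↦ u_g` against `K` and against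
`K*` (compact by Schauder's theorem) this gives norm continuity of `g ↦ u_g K u_g*`. Applied to
`π(e)` along an approximate unit `e` of `C₀(X)`, which tends strongly to `1` by nondegeneracy, it
gives `π(e) K → K` in norm. Covariance rewrites `π(φ) u_g π(e) K u_g*` as
`π(φ · g•e) u_g K u_g*`, and properness of the action makes `‖φ · g•e‖ → 0` as `g → ∞`.
-/

open scoped ZeroAtInfty
open Filter MeasureTheory Topology

noncomputable section

variable {G : Type*} [Group G] [TopologicalSpace G] [IsTopologicalGroup G]
  [LocallyCompactSpace G] [SecondCountableTopology G] [T2Space G]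
variable {X : Type*} [TopologicalSpace X] [LocallyCompactSpace X] [T2Space X]
variable [MulAction G X] [ContinuousSMul G X]
variable {H : Type*} [NormedAddCommGroup H] [InnerProductSpace ℂ H] [CompleteSpace H]
  [SecondCountableTopology H]

/-- The translation action of `G` on `C₀(X, ℂ)`: `(g • φ)(x) = φ(g⁻¹ • x)`. -/
def C0smul (g : G) (φ : C₀(X, ℂ)) : C₀(X, ℂ) where
  toFun := fun x => φ (g⁻¹ • x)
  continuous_toFun := φ.continuous.comp (continuous_const_smul g⁻¹)
  zero_at_infty' := φ.zero_at_infty'.comp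
    ((Homeomorph.smul (g⁻¹ : G)).toCocompactMap.cocompact_tendsto')

/-- Conjugation `g(T) = u_g T u_g⁻¹` by the unitary representation `u`. -/
def conjU (u : G →* unitary (H →L[ℂ] H)) (g : G) (T : H →L[ℂ] H) : H →L[ℂ] H :=
  (u g : H →L[ℂ] H) * T * ((u g⁻¹ : unitary (H →L[ℂ] H)) : H →L[ℂ] H)

/-- Membership in `C₀(G, K(H))`: norm-continuous, compact-operator valued, and
norm vanishing along the cocompact filter on `G`. -/
def InC0GK (f : G → (H →L[ℂ] H)) : Prop :=
  Continuous f ∧ (∀ g, IsCompactOperator (⇑(f g))) ∧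
    Tendsto (fun g => ‖f g‖) (cocompact G) (𝓝 0)

open Metric Set
open scoped NNReal

theorem TotallyBounded.of_image {α β : Type*} [PseudoMetricSpace α] [PseudoMetricSpace β]
    {s : Set α} {f : α → β} (hs : TotallyBounded (f '' s))
    (hf : ∀ ε > 0, ∃ δ > 0, ∀ x ∈ s, ∀ y ∈ s, dist (f x) (f y) < δ → dist x y < ε) :
    TotallyBounded s := by
  refine Metric.totallyBounded_iff.2 fun ε hε => ?_
  obtain ⟨δ, hδ, hfδ⟩ := hf ε hε
  obtain ⟨u, hus, huf, hsu⟩ := exists_subset_image_finite_and.1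
    (Metric.finite_approx_of_totallyBounded hs δ hδ)
  refine ⟨u, huf, fun x hx => ?_⟩
  obtain ⟨_, ⟨y, hyu, rfl⟩, hxy⟩ := mem_iUnion₂.1 (hsu (mem_image_of_mem f hx))
  exact mem_iUnion₂.2 ⟨y, hyu, hfδ x hx y (hus hyu) hxy⟩

section Adjoint

variable {𝕜 E F : Type*} [RCLike 𝕜] [NormedAddCommGroup E] [InnerProductSpace 𝕜 E] [CompleteSpace E]
  [NormedAddCommGroup F] [InnerProductSpace 𝕜 F] [CompleteSpace F]

open scoped InnerProduct in
theorem IsCompactOperator.adjoint {K : E →L[𝕜] F} (hK : IsCompactOperator K) :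
    IsCompactOperator (ContinuousLinearMap.adjoint K) := by
  refine (isCompactOperator_iff_isCompact_closure_image_closedBall (K†).toLinearMap one_pos).2
    ((totallyBounded_closure.2 ?_).isCompact_of_isClosed isClosed_closure)
  have hKK : TotallyBounded (K '' (K† '' closedBall 0 1)) := by
    have hcomp : IsCompactOperator (K ∘L K†) := hK.comp_clm (K†)
    rw [image_image]
    exact (hcomp.isCompact_closure_image_closedBall 1).totallyBounded.subset subset_closure
  -- `‖K† w‖² = re ⟪w, K K† w⟫`: on the ball, `K†` is controlled by the compact operator `K K†`
  refine hKK.of_image fun ε hε => ⟨ε ^ 2 / 2, by positivity, ?_⟩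
  rintro _ ⟨x, hx, rfl⟩ _ ⟨y, hy, rfl⟩ hxy
  rw [mem_closedBall_zero_iff] at hx hy
  rw [dist_eq_norm] at hxy ⊢
  have hsq : ‖(K†) (x - y)‖ ^ 2 ≤ ‖x - y‖ * ‖K ((K†) (x - y))‖ := by
    rw [ContinuousLinearMap.apply_norm_sq_eq_inner_adjoint_right,
      ContinuousLinearMap.adjoint_adjoint]
    exact re_inner_le_norm _ _
  simp only [map_sub] at hsq
  have hxy2 : ‖x - y‖ ≤ 2 := (norm_sub_le x y).trans (by linarith)
  refine lt_of_pow_lt_pow_left₀ 2 hε.le (hsq.trans_lt ?_)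
  nlinarith [norm_nonneg (K ((K†) x) - K ((K†) y)), norm_nonneg (x - y)]

end Adjoint

section StrongConvergence

variable {ι 𝕜 E F W : Type*} [RCLike 𝕜] [NormedAddCommGroup E] [NormedSpace 𝕜 E]
  [NormedAddCommGroup F] [NormedSpace 𝕜 F] [NormedAddCommGroup W] [NormedSpace 𝕜 W]

theorem tendsto_comp_of_isCompactOperator {l : Filter ι} {A : ι → F →L[𝕜] W} {B : F →L[𝕜] W}
    {M : ℝ≥0} (hbd : ∀ i, ‖A i‖ ≤ M) (hA : ∀ v, Tendsto (fun i => A i v) l (𝓝 (B v)))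
    {C : E →L[𝕜] F} (hC : IsCompactOperator C) :
    Tendsto (fun i => (A i).comp C) l (𝓝 (B.comp C)) := by
  set S := closure (C '' closedBall 0 1)
  have : CompactSpace S := isCompact_iff_compactSpace.1 (hC.isCompact_closure_image_closedBall 1)
  have hequi : Equicontinuous fun i (y : S) => A i y :=
    (LipschitzWith.uniformEquicontinuous _ _ fun i =>
      ((A i).lipschitzWith_of_opNorm_le (hbd i)).comp (LipschitzWith.subtype_val S)).equicontinuous
  have hunif : TendstoUniformly (fun i (y : S) => A i y) (fun y => B y) l :=
    UniformFun.tendsto_iff_tendstoUniformly.1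
      ((hequi.tendsto_uniformFun_iff_pi l _).2 (tendsto_pi_nhds.2 fun y => hA y))
  refine Metric.tendsto_nhds.2 fun ε hε => ?_
  filter_upwards [Metric.tendstoUniformly_iff.1 hunif (ε / 2) (half_pos hε)] with i hi
  refine (dist_eq_norm _ _).trans_lt (lt_of_le_of_lt ?_ (half_lt_self hε))
  refine ContinuousLinearMap.opNorm_le_of_unit_norm (half_pos hε).le fun x hx => ?_
  have hCx : C x ∈ S := subset_closure (mem_image_of_mem C (by simp [hx]))
  simpa [dist_eq_norm'] using (hi ⟨C x, hCx⟩).le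

theorem isClosed_setOf_tendsto_apply {l : Filter ι} {A : ι → F →L[𝕜] W} {B : F →L[𝕜] W}
    {M : ℝ≥0} (hbd : ∀ i, ‖A i‖ ≤ M) : IsClosed {v | Tendsto (fun i => A i v) l (𝓝 (B v))} :=
  (LipschitzWith.uniformEquicontinuous _ M fun i =>
    (A i).lipschitzWith_of_opNorm_le (hbd i)).equicontinuous.isClosed_setOfPred_tendsto B.continuous

end StrongConvergence

theorem continuous_unitary_mul_mul {α R : Type*} [TopologicalSpace α] [NormedRing R] [StarRing R]
    [CStarRing R] {x z : α → unitary R} {y : R} (hxy : Continuous fun a => (x a : R) * y)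
    (hyz : Continuous fun a => y * (z a : R)) : Continuous fun a => (x a : R) * y * z a := by
  refine continuous_iff_continuousAt.2 fun a₀ => tendsto_iff_dist_tendsto_zero.2 ?_
  have key : ∀ a, dist ((x a : R) * y * z a) (x a₀ * y * z a₀)
      ≤ dist ((x a : R) * y) (x a₀ * y) + dist (y * (z a : R)) (y * z a₀) := fun a => by
    rw [dist_eq_norm, dist_eq_norm, dist_eq_norm]
    calc ‖(x a : R) * y * z a - x a₀ * y * z a₀‖
        = ‖((x a : R) * y - x a₀ * y) * z a + x a₀ * (y * z a - y * z a₀)‖ := by noncomm_ring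
      _ ≤ _ := (norm_add_le _ _).trans_eq (by
          rw [CStarRing.norm_mul_coe_unitary, CStarRing.norm_coe_unitary_mul])
  refine squeeze_zero (fun _ => dist_nonneg) key ?_
  simpa using (tendsto_iff_dist_tendsto_zero.1 (hxy.tendsto a₀)).add
    (tendsto_iff_dist_tendsto_zero.1 (hyz.tendsto a₀))

/-- Indexing by the closed unit ball keeps `e ↦ π e` uniformly bounded for any `⋆`-homomorphism
`π`. The spectral order serves only to build Mathlib's approximate unit; `A` carries no order. -/
theorem exists_approximateUnit_closedBall (A : Type*) [NonUnitalCStarAlgebra A] :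
    ∃ l : Filter (closedBall (0 : A) 1), l.NeBot ∧
      ∀ a, Tendsto (fun e : closedBall (0 : A) 1 => (e : A) * a) l (𝓝 a) := by
  let _ := CStarAlgebra.spectralOrder A
  let _ := CStarAlgebra.spectralOrderedRing A
  have hl := CStarAlgebra.increasingApproximateUnit A
  refine ⟨comap (↑) (CStarAlgebra.approximateUnit A), ?_,
    fun a => (hl.tendsto_mul_right a).comp tendsto_comap⟩
  exact NeBot.comap_of_range_mem inferInstance
    (mem_of_superset hl.eventually_norm fun x hx => ⟨⟨x, mem_closedBall_zero_iff.2 hx⟩, rfl⟩)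

section Representation

open scoped CStarAlgebra

variable {A E : Type*} [NonUnitalCStarAlgebra A] [NormedAddCommGroup E] [InnerProductSpace ℂ E]
  [CompleteSpace E] (π : A →⋆ₙₐ[ℂ] (E →L[ℂ] E)) {l : Filter (closedBall (0 : A) 1)}

theorem tendsto_apply_of_dense_span
    (hπ : Dense (Submodule.span ℂ (range fun p : A × E => π p.1 p.2) : Set E))
    (hl : ∀ a, Tendsto (fun e : closedBall (0 : A) 1 => (e : A) * a) l (𝓝 a)) (v : E) :
    Tendsto (fun e : closedBall (0 : A) 1 => π e v) l (𝓝 v) := by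
  let D : Submodule ℂ E :=
    { carrier := {v | Tendsto (fun e : closedBall (0 : A) 1 => π e v) l (𝓝 v)}
      add_mem' := fun h₁ h₂ => by simpa using h₁.add h₂
      zero_mem' := by simpa using tendsto_const_nhds
      smul_mem' := fun c _ h => by simpa using h.const_smul c }
  have hD : IsClosed (D : Set E) :=
    isClosed_setOf_tendsto_apply (B := ContinuousLinearMap.id ℂ E) (M := 1) fun e =>
      (NonUnitalStarAlgHom.norm_apply_le π (e : A)).trans (mem_closedBall_zero_iff.1 e.2)
  have hspan : Submodule.span ℂ (range fun p : A × E => π p.1 p.2) ≤ D := by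
    rw [Submodule.span_le]
    rintro _ ⟨⟨a, w⟩, rfl⟩
    change Tendsto _ _ _
    have := ((continuous_eval_const w).tendsto _).comp (((map_continuous π).tendsto a).comp (hl a))
    simpa [Function.comp_def] using this
  exact hD.closure_subset_iff.2 hspan (hπ v)

theorem tendsto_mul_of_isCompactOperator
    (hπ : Dense (Submodule.span ℂ (range fun p : A × E => π p.1 p.2) : Set E))
    (hl : ∀ a, Tendsto (fun e : closedBall (0 : A) 1 => (e : A) * a) l (𝓝 a))
    {K : E →L[ℂ] E} (hK : IsCompactOperator K) :
    Tendsto (fun e : closedBall (0 : A) 1 => π e * K) l (𝓝 K) :=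
  tendsto_comp_of_isCompactOperator (B := ContinuousLinearMap.id ℂ E) (M := 1)
    (fun e : closedBall (0 : A) 1 =>
      (NonUnitalStarAlgHom.norm_apply_le π (e : A)).trans (mem_closedBall_zero_iff.1 e.2))
    (tendsto_apply_of_dense_span π hπ hl) hK

end Representation

namespace ZeroAtInftyContinuousMap

variable {α β : Type*} [TopologicalSpace α] [NormedAddCommGroup β]

theorem isCompact_setOf_le_norm (f : C₀(α, β)) {δ : ℝ} (hδ : 0 < δ) :
    IsCompact {x | δ ≤ ‖f x‖} := by
  obtain ⟨K, hK, hKf⟩ := mem_cocompact.1 (zero_at_infty f (ball_mem_nhds 0 hδ))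
  refine hK.of_isClosed_subset (isClosed_le continuous_const f.continuous.norm) fun x hx => ?_
  by_contra hxK
  exact not_lt.2 hx (by simpa using hKf hxK)

theorem norm_le_of_forall {f : C₀(α, β)} {M : ℝ} (hM : 0 ≤ M) (h : ∀ x, ‖f x‖ ≤ M) : ‖f‖ ≤ M :=
  (BoundedContinuousFunction.norm_le hM (f := f.toBCF)).2 h

theorem norm_apply_le (f : C₀(α, β)) (x : α) : ‖f x‖ ≤ ‖f‖ :=
  f.toBCF.norm_coe_le_norm x

end ZeroAtInftyContinuousMap

theorem tendsto_mul_C0smul_cocompact {Γ Y : Type*} [Group Γ] [TopologicalSpace Γ]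
    [TopologicalSpace Y] [MulAction Γ Y] [ContinuousSMul Γ Y]
    (hproper : IsProperMap fun p : Γ × Y => (p.1 • p.2, p.2)) (φ ψ : C₀(Y, ℂ)) :
    Tendsto (fun g : Γ => φ * C0smul g ψ) (cocompact Γ) (𝓝 0) := by
  refine Metric.tendsto_nhds.2 fun ε hε => ?_
  set δ := ε / (‖φ‖ + ‖ψ‖ + 1)
  have hδ : 0 < δ := by positivity
  -- the `g` for which `|φ x| ≥ δ` and `|ψ (g⁻¹ • x)| ≥ δ` at some `x`
  have hC : IsCompact (Prod.fst '' ((fun p : Γ × Y => (p.1 • p.2, p.2)) ⁻¹'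
      ({x | δ ≤ ‖φ x‖} ×ˢ {y | δ ≤ ‖ψ y‖}))) :=
    (hproper.isCompact_preimage ((φ.isCompact_setOf_le_norm hδ).prod
      (ψ.isCompact_setOf_le_norm hδ))).image continuous_fst
  filter_upwards [hC.compl_mem_cocompact] with g hg
  have hpt : ∀ x, ‖φ x * ψ (g⁻¹ • x)‖ ≤ δ * (‖φ‖ + ‖ψ‖) := fun x => by
    have h₁ := φ.norm_apply_le x
    have h₂ := ψ.norm_apply_le (g⁻¹ • x)
    rw [norm_mul]
    by_cases hφx : ‖φ x‖ < δ
    · nlinarith [norm_nonneg (ψ (g⁻¹ • x)), norm_nonneg φ]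
    by_cases hψx : ‖ψ (g⁻¹ • x)‖ < δ
    · nlinarith [norm_nonneg (φ x), norm_nonneg ψ]
    exact absurd ⟨(g, g⁻¹ • x), by simpa using ⟨not_lt.1 hφx, not_lt.1 hψx⟩, rfl⟩ hg
  rw [dist_zero_right]
  calc ‖φ * C0smul g ψ‖ ≤ δ * (‖φ‖ + ‖ψ‖) :=
        ZeroAtInftyContinuousMap.norm_le_of_forall (by positivity) hpt
    _ < δ * (‖φ‖ + ‖ψ‖ + 1) := mul_lt_mul_of_pos_left (lt_add_one _) hδ
    _ = ε := div_mul_cancel₀ ε (by positivity)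

section Conjugation

theorem coe_map_inv_eq_star {Γ R : Type*} [Group Γ] [Monoid R] [StarMul R] (u : Γ →* unitary R)
    (g : Γ) : ((u g⁻¹ : unitary R) : R) = star (u g : R) := by
  rw [map_inv, ← Unitary.coe_star, Unitary.star_eq_inv]

theorem norm_conjStarAlgAut {R : Type*} [NormedRing R] [StarRing R] [CStarRing R]
    [NormedAlgebra ℂ R] (U : unitary R) (x : R) : ‖Unitary.conjStarAlgAut ℂ R U x‖ = ‖x‖ := by
  rw [Unitary.conjStarAlgAut_apply, ← Unitary.coe_star, CStarRing.norm_mul_coe_unitary,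
    CStarRing.norm_coe_unitary_mul]

variable {E : Type*} [NormedAddCommGroup E] [InnerProductSpace ℂ E] [CompleteSpace E]

theorem conjU_eq_conjStarAlgAut {Γ : Type*} [Group Γ] (u : Γ →* unitary (E →L[ℂ] E)) (g : Γ)
    (T : E →L[ℂ] E) : conjU u g T = Unitary.conjStarAlgAut ℂ _ (u g) T := by
  rw [conjU, coe_map_inv_eq_star]
  rfl

theorem norm_coe_unitary_le_one (U : unitary (E →L[ℂ] E)) : ‖(U : E →L[ℂ] E)‖ ≤ 1 :=
  ContinuousLinearMap.opNorm_le_bound _ zero_le_one fun x => by rw [Unitary.norm_map, one_mul]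

theorem continuous_conjStarAlgAut_of_isCompactOperator {α : Type*} [TopologicalSpace α]
    {u : α → unitary (E →L[ℂ] E)} (hu : ∀ v, Continuous fun a => (u a : E →L[ℂ] E) v)
    {K : E →L[ℂ] E} (hK : IsCompactOperator K) :
    Continuous fun a => Unitary.conjStarAlgAut ℂ _ (u a) K := by
  have hleft : ∀ {C : E →L[ℂ] E}, IsCompactOperator C →
      Continuous fun a => (u a : E →L[ℂ] E) * C := fun hC =>
    continuous_iff_continuousAt.2 fun a =>
      tendsto_comp_of_isCompactOperator (M := 1) (fun a => norm_coe_unitary_le_one (u a))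
        (fun v => (hu v).tendsto a) hC
  -- `K (u a)* = ((u a) K*)*` and `K*` is compact
  have hright : Continuous fun a => K * ((star (u a) : unitary (E →L[ℂ] E)) : E →L[ℂ] E) := by
    simpa [star_mul, ContinuousLinearMap.star_eq_adjoint] using (hleft hK.adjoint).star
  exact continuous_unitary_mul_mul (hleft hK) hright

end Conjugation

/-- Split `K = (K - π e * K) + π e * K` and move `π e` through the conjugation by covariance. -/
theorem norm_mul_conjStarAlgAut_le {Γ Y E : Type*} [Group Γ] [TopologicalSpace Γ]
    [TopologicalSpace Y] [MulAction Γ Y] [ContinuousSMul Γ Y]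
    [NormedAddCommGroup E] [InnerProductSpace ℂ E] [CompleteSpace E]
    (u : Γ →* unitary (E →L[ℂ] E)) (π : C₀(Y, ℂ) →⋆ₙₐ[ℂ] (E →L[ℂ] E))
    (hcov : ∀ (g : Γ) (φ : C₀(Y, ℂ)),
      (u g : E →L[ℂ] E) * π φ * ((u g⁻¹ : unitary (E →L[ℂ] E)) : E →L[ℂ] E) = π (C0smul g φ))
    (φ e : C₀(Y, ℂ)) (g : Γ) (K : E →L[ℂ] E) :
    ‖π φ * Unitary.conjStarAlgAut ℂ _ (u g) K‖ ≤ ‖φ‖ * ‖K - π e * K‖ + ‖φ * C0smul g e‖ * ‖K‖ := by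
  set c := Unitary.conjStarAlgAut ℂ (E →L[ℂ] E) (u g)
  have hce : c (π e) = π (C0smul g e) := by
    rw [← hcov, coe_map_inv_eq_star]
    rfl
  have hsplit : π φ * c K = π φ * c (K - π e * K) + π (φ * C0smul g e) * c K := by
    rw [map_sub, map_mul, hce, map_mul]
    noncomm_ring
  rw [hsplit]
  refine (norm_add_le _ _).trans (add_le_add ?_ ?_) <;> refine (norm_mul_le _ _).trans ?_ <;>
    rw [norm_conjStarAlgAut] <;> gcongr <;> exact NonUnitalStarAlgHom.norm_apply_le π _

theorem statement_7
    (u : G →* unitary (H →L[ℂ] H))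
    (hu : ∀ v : H, Continuous fun g : G => (u g : H →L[ℂ] H) v)
    (π : C₀(X, ℂ) →⋆ₙₐ[ℂ] (H →L[ℂ] H))
    (hπnd : Dense (Submodule.span ℂ (Set.range fun p : C₀(X, ℂ) × H => π p.1 p.2) : Set H))
    (hcov : ∀ (g : G) (φ : C₀(X, ℂ)),
      (u g : H →L[ℂ] H) * π φ * ((u g⁻¹ : unitary (H →L[ℂ] H)) : H →L[ℂ] H) = π (C0smul g φ))
    (hproper : IsProperMap fun p : G × X => (p.1 • p.2, p.2))
    (T : H →L[ℂ] H) (hT : IsCompactOperator (⇑((1 : H →L[ℂ] H) - T ^ 2))) (φ : C₀(X, ℂ)) :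
    InC0GK (fun g : G => π φ * ((1 : H →L[ℂ] H) - (conjU u g T) ^ 2)) := by
  set K := (1 : H →L[ℂ] H) - T ^ 2
  have hconj : ∀ g, (1 : H →L[ℂ] H) - conjU u g T ^ 2 = Unitary.conjStarAlgAut ℂ _ (u g) K :=
    fun g => by rw [conjU_eq_conjStarAlgAut, map_sub, map_one, map_pow]
  simp only [hconj]
  refine ⟨continuous_const.mul (continuous_conjStarAlgAut_of_isCompactOperator hu hT),
    fun g => ?_, ?_⟩
  · simp only [Unitary.conjStarAlgAut_apply]
    exact (hT.comp_clm ((star (u g) : unitary (H →L[ℂ] H)) : H →L[ℂ] H)).clm_comp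
      (π φ * (u g : H →L[ℂ] H))
  refine Metric.tendsto_nhds.2 fun ε hε => ?_
  obtain ⟨l, hne, hl⟩ := exists_approximateUnit_closedBall C₀(X, ℂ)
  have h₁ : Tendsto (fun e : closedBall (0 : C₀(X, ℂ)) 1 => ‖φ‖ * ‖K - π e * K‖) l (𝓝 0) := by
    simpa using ((tendsto_mul_of_isCompactOperator π hπnd hl hT).const_sub K).norm.const_mul ‖φ‖
  obtain ⟨e, he⟩ := (h₁.eventually (gt_mem_nhds (half_pos hε))).exists
  have h₂ : Tendsto (fun g => ‖φ * C0smul g (e : C₀(X, ℂ))‖ * ‖K‖) (cocompact G) (𝓝 0) := by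
    simpa using (tendsto_mul_C0smul_cocompact hproper φ e).norm.mul_const ‖K‖
  filter_upwards [h₂.eventually (gt_mem_nhds (half_pos hε))] with g hg
  rw [dist_zero_right, norm_norm]
  linarith [norm_mul_conjStarAlgAut_le u π hcov φ e g K]

end
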